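/- Let $0<\lambda<1$. For every Bloch function $g$ on the unit disk and all $z\ne\zeta$ in $\mathbb{D}$, $|g(z)-g(\zeta)|\,(1-|z|^2)^{1-\lambda}(1-|\zeta|^2)^{1-\lambda}\le C\,\|g\|_{\mathcal{B}}\,|z-\zeta|\,|1-\bar z\zeta|^{1-2\lambda}$ for some constant $C=C(\lambda)$ independent of $g,z,\zeta$. -/

import Mathlib

open MeasureTheory Metric Filter Complex Set
open scoped ENNReal NNReal Topology

/-- The normalized area measure on `ℂ`. -/
noncomputable def dA : Measure ℂ := (ENNReal.ofReal Real.pi)⁻¹ • volume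

/-- The standard weight `ω_a(z) = (1+a)(1-|z|²)^a`. -/
noncomputable def stdW (a : ℝ) (z : ℂ) : ℝ := (1 + a) * (1 - ‖z‖ ^ 2) ^ a

/-- The weighted `L^p` (quasi-)norm over the unit disk. -/
noncomputable def wnorm (p a : ℝ) (f : ℂ → ℂ) : ℝ≥0∞ :=
  (∫⁻ z in ball (0 : ℂ) 1, ENNReal.ofReal (‖f z‖ ^ p * stdW a z) ∂dA) ^ (1 / p)

/-- The pseudohyperbolic disk `D(z,r)`. -/
def pD (z : ℂ) (r : ℝ) : Set ℂ :=
  {w | w ∈ ball (0 : ℂ) 1 ∧ ‖(z - w) / (1 - (starRingEnd ℂ) z * w)‖ < r}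

/-- The Toeplitz operator `T_{μ,b}`. -/
noncomputable def Toep (μ : Measure ℂ) (b : ℝ) (f : ℂ → ℂ) (z : ℂ) : ℂ :=
  ∫ w in ball (0 : ℂ) 1, f w / (1 - z * (starRingEnd ℂ) w) ^ (((2 + b : ℝ)) : ℂ) ∂μ

/-- The Bloch norm. -/
noncomputable def blochNorm (g : ℂ → ℂ) : ℝ :=
  ‖g 0‖ + sSup ((fun z => (1 - ‖z‖ ^ 2) * ‖deriv g z‖) '' ball (0 : ℂ) 1)

/-- Membership in the Bloch space. -/
def MemBloch (g : ℂ → ℂ) : Prop :=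
  DifferentiableOn ℂ g (ball (0 : ℂ) 1) ∧
    BddAbove ((fun z => (1 - ‖z‖ ^ 2) * ‖deriv g z‖) '' ball (0 : ℂ) 1)

open scoped ComplexConjugate

/-!
Precomposing `g` with the disk automorphism `moebius ζ`, which swaps `ζ` and `0`, preserves the
Bloch bound `(1 - |v|²) |g'(v)| ≤ S`; integrating along a radius then gives
`|g z - g ζ| ≤ S log (1 / (1 - ρ))`, where `ρ = |z - ζ| / |1 - z̄ ζ|` is the pseudohyperbolic
distance. Since `(1 - |z|²) (1 - |ζ|²) = (1 - ρ²) |1 - z̄ ζ|²` and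
`log (1 / (1 - ρ)) (1 - ρ²) ^ (1 - λ) ≤ 2 ρ / (1 - λ)`, the estimate holds with `C = 2 / (1 - λ)`.
-/

noncomputable def moebius (a u : ℂ) : ℂ := (a - u) / (1 - conj a * u)

theorem norm_one_sub_conj_mul_sq_sub_norm_sub_sq (a u : ℂ) :
    ‖1 - conj a * u‖ ^ 2 - ‖a - u‖ ^ 2 = (1 - ‖a‖ ^ 2) * (1 - ‖u‖ ^ 2) := by
  simp only [Complex.sq_norm, Complex.normSq_apply, Complex.sub_re, Complex.sub_im,
    Complex.mul_re, Complex.mul_im, Complex.one_re, Complex.one_im, Complex.conj_re,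
    Complex.conj_im]
  ring

theorem one_sub_conj_mul_ne_zero {a u : ℂ} (ha : ‖a‖ < 1) (hu : ‖u‖ ≤ 1) :
    1 - conj a * u ≠ 0 := by
  refine sub_ne_zero.mpr (ne_of_apply_ne norm (ne_of_gt ?_))
  rw [norm_mul, RCLike.norm_conj, norm_one]
  nlinarith [norm_nonneg a]

theorem norm_one_sub_conj_mul_comm (a u : ℂ) : ‖1 - conj a * u‖ = ‖1 - conj u * a‖ := by
  rw [← RCLike.norm_conj, map_sub, map_one, map_mul, conj_conj, mul_comm]

theorem one_sub_norm_moebius_sq {a u : ℂ} (ha : ‖a‖ < 1) (hu : ‖u‖ ≤ 1) :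
    1 - ‖moebius a u‖ ^ 2 = (1 - ‖a‖ ^ 2) * (1 - ‖u‖ ^ 2) / ‖1 - conj a * u‖ ^ 2 := by
  have hd : 0 < ‖1 - conj a * u‖ ^ 2 := by
    have := one_sub_conj_mul_ne_zero ha hu
    positivity
  rw [moebius, norm_div, div_pow, ← norm_one_sub_conj_mul_sq_sub_norm_sub_sq, sub_div,
    div_self hd.ne']

theorem norm_moebius_lt_one {a u : ℂ} (ha : ‖a‖ < 1) (hu : ‖u‖ < 1) : ‖moebius a u‖ < 1 := by
  have hd := one_sub_conj_mul_ne_zero ha hu.le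
  have hpos : 0 < 1 - ‖moebius a u‖ ^ 2 := by
    rw [one_sub_norm_moebius_sq ha hu.le]
    exact div_pos (mul_pos (by nlinarith [norm_nonneg a]) (by nlinarith [norm_nonneg u]))
      (by positivity)
  nlinarith [norm_nonneg (moebius a u)]

theorem moebius_zero (a : ℂ) : moebius a 0 = a := by simp [moebius]

theorem moebius_moebius {a u : ℂ} (ha : ‖a‖ < 1) (hu : ‖u‖ < 1) :
    moebius a (moebius a u) = u := by
  have h := one_sub_conj_mul_ne_zero ha hu.le
  have h2 := one_sub_conj_mul_ne_zero ha (norm_moebius_lt_one ha hu).le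
  rw [moebius, div_eq_iff h2, moebius]
  linear_combination (-(a - u)) * mul_inv_cancel₀ h

theorem hasDerivAt_moebius {a u : ℂ} (h : 1 - conj a * u ≠ 0) :
    HasDerivAt (moebius a) (((‖a‖ ^ 2 - 1 : ℝ) : ℂ) / (1 - conj a * u) ^ 2) u := by
  have hnum : HasDerivAt (fun v : ℂ => a - v) (-1) u := by
    simpa using (hasDerivAt_id u).const_sub a
  have hden : HasDerivAt (fun v : ℂ => 1 - conj a * v) (-conj a) u := by
    simpa using ((hasDerivAt_id u).const_mul (conj a)).const_sub 1
  refine (hnum.div hden h).congr_deriv ?_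
  rw [← Complex.normSq_eq_norm_sq, Complex.ofReal_sub, Complex.normSq_eq_conj_mul_self]
  push_cast
  ring

theorem norm_deriv_moebius {a u : ℂ} (ha : ‖a‖ < 1) :
    ‖((‖a‖ ^ 2 - 1 : ℝ) : ℂ) / (1 - conj a * u) ^ 2‖ = (1 - ‖a‖ ^ 2) / ‖1 - conj a * u‖ ^ 2 := by
  rw [norm_div, norm_pow, Complex.norm_real, Real.norm_eq_abs, abs_sub_comm,
    abs_of_nonneg (by nlinarith [norm_nonneg a])]

theorem one_sub_norm_sq_mul_one_sub_norm_sq {z ζ : ℂ} (hz : ‖z‖ < 1) (hζ : ‖ζ‖ < 1) :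
    (1 - ‖z‖ ^ 2) * (1 - ‖ζ‖ ^ 2) = (1 - ‖moebius ζ z‖ ^ 2) * ‖1 - conj z * ζ‖ ^ 2 := by
  have hd := one_sub_conj_mul_ne_zero hζ hz.le
  rw [one_sub_norm_moebius_sq hζ hz.le, norm_one_sub_conj_mul_comm z,
    div_mul_cancel₀ _ (by positivity)]
  ring

theorem norm_moebius_mul_norm_one_sub_conj_mul {z ζ : ℂ} (hz : ‖z‖ < 1) (hζ : ‖ζ‖ < 1) :
    ‖moebius ζ z‖ * ‖1 - conj z * ζ‖ = ‖z - ζ‖ := by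
  have hd := one_sub_conj_mul_ne_zero hζ hz.le
  rw [moebius, norm_div, norm_one_sub_conj_mul_comm z, norm_sub_rev,
    div_mul_cancel₀ _ (by positivity)]

theorem neg_log_one_sub_le {ε r : ℝ} (hε0 : 0 < ε) (hε1 : ε ≤ 1) (hr0 : 0 ≤ r) (hr1 : r < 1) :
    -Real.log (1 - r) ≤ r * (1 - r) ^ (-ε) / ε := by
  have hpos : 0 < 1 - r := by linarith
  have hlog : -ε * Real.log (1 - r) ≤ (1 - r) ^ (-ε) - 1 := by
    rw [← Real.log_rpow hpos]
    exact Real.log_le_sub_one_of_pos (Real.rpow_pos_of_pos hpos _)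
  -- `(1 - r) ^ ε ≥ 1 - r` turns `(1 - r) ^ (-ε) - 1` into at most `r (1 - r) ^ (-ε)`.
  have hpow : 1 - r ≤ (1 - r) ^ ε := Real.self_le_rpow_of_le_one hpos.le (by linarith) hε1
  have hsplit : (1 - r) ^ (-ε) * (1 - r) ^ ε = 1 := by
    rw [← Real.rpow_add hpos, neg_add_cancel, Real.rpow_zero]
  rw [le_div_iff₀ hε0]
  nlinarith [Real.rpow_pos_of_pos hpos (-ε)]

theorem neg_log_one_sub_mul_one_sub_sq_rpow_le {ε r : ℝ} (hε0 : 0 < ε) (hε1 : ε ≤ 1)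
    (hr0 : 0 ≤ r) (hr1 : r < 1) :
    -Real.log (1 - r) * (1 - r ^ 2) ^ ε ≤ 2 / ε * r := by
  have hpos : 0 < 1 - r := by linarith
  have h1r : (1 + r) ^ ε ≤ 2 :=
    (Real.rpow_le_rpow_of_exponent_le (by linarith) hε1).trans (by rw [Real.rpow_one]; linarith)
  calc -Real.log (1 - r) * (1 - r ^ 2) ^ ε
      ≤ r * (1 - r) ^ (-ε) / ε * ((1 + r) ^ ε * (1 - r) ^ ε) := by
        rw [show 1 - r ^ 2 = (1 + r) * (1 - r) by ring, Real.mul_rpow (by linarith) hpos.le]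
        gcongr
        exact neg_log_one_sub_le hε0 hε1 hr0 hr1
    _ = r * (1 + r) ^ ε / ε := by
        rw [Real.rpow_neg hpos.le]
        field_simp
    _ ≤ 2 / ε * r := by
        rw [div_mul_eq_mul_div, mul_comm 2 r]
        gcongr

section

variable {E : Type*} [NormedAddCommGroup E] [NormedSpace ℂ E]

theorem one_sub_norm_sq_mul_norm_deriv_comp_moebius {g : ℂ → E} {a u : ℂ} (ha : ‖a‖ < 1)
    (hu : ‖u‖ < 1) (hg : DifferentiableAt ℂ g (moebius a u)) :
    (1 - ‖u‖ ^ 2) * ‖deriv (g ∘ moebius a) u‖ =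
      (1 - ‖moebius a u‖ ^ 2) * ‖deriv g (moebius a u)‖ := by
  have hd := one_sub_conj_mul_ne_zero ha hu.le
  rw [(hg.hasDerivAt.scomp u (hasDerivAt_moebius hd)).deriv, norm_smul, norm_deriv_moebius ha,
    one_sub_norm_moebius_sq ha hu.le]
  ring

theorem norm_sub_apply_zero_le_of_bloch {f : ℂ → E} {S : ℝ}
    (hf : DifferentiableOn ℂ f (ball 0 1))
    (hS : ∀ v ∈ ball (0 : ℂ) 1, (1 - ‖v‖ ^ 2) * ‖deriv f v‖ ≤ S) {w : ℂ} (hw : ‖w‖ < 1) :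
    ‖f w - f 0‖ ≤ S * -Real.log (1 - ‖w‖) := by
  set ρ := ‖w‖
  have hρ0 : 0 ≤ ρ := norm_nonneg w
  have hden : ∀ t ∈ Icc (0 : ℝ) 1, 0 < 1 - t * ρ := fun t ht => by nlinarith [ht.2]
  have hnorm : ∀ t ∈ Icc (0 : ℝ) 1, ‖(t : ℂ) * w‖ = t * ρ := fun t ht => by
    rw [norm_mul, Complex.norm_real, Real.norm_of_nonneg ht.1]
  have hmem : ∀ t ∈ Icc (0 : ℝ) 1, (t : ℂ) * w ∈ ball (0 : ℂ) 1 := fun t ht => by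
    rw [mem_ball_zero_iff, hnorm t ht]; nlinarith [ht.2]
  have hF : ∀ t ∈ Icc (0 : ℝ) 1,
      HasDerivAt (fun s : ℝ => f (s * w) - f 0) (w • deriv f (t * w)) t := fun t ht => by
    have hft := (hf.differentiableAt (isOpen_ball.mem_nhds (hmem t ht))).hasDerivAt
    have hpath : HasDerivAt (fun s : ℝ => (s : ℂ) * w) w t := by
      simpa using (hasDerivAt_id t).ofReal_comp.mul_const w
    exact (hft.scomp t hpath).sub_const (f 0)
  have hB : ∀ t ∈ Icc (0 : ℝ) 1,
      HasDerivAt (fun s => S * -Real.log (1 - s * ρ)) (S * (ρ / (1 - t * ρ))) t := fun t ht => by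
    refine ((((hasDerivAt_id t).mul_const ρ).const_sub 1).log (hden t ht).ne').neg.const_mul S
      |>.congr_deriv ?_
    simp [neg_div]
  have hbound : ∀ t ∈ Ico (0 : ℝ) 1, ‖w • deriv f (t * w)‖ ≤ S * (ρ / (1 - t * ρ)) := by
    intro t ht
    have ht' := Ico_subset_Icc_self ht
    -- `1 - tρ ≤ 1 - (tρ)²` on `[0, 1]`, so the Bloch bound at `tw` controls `(1 - tρ) ‖f'(tw)‖`.
    have hle : (1 - t * ρ) * ‖deriv f (t * w)‖ ≤ S := by
      refine le_trans (mul_le_mul_of_nonneg_right ?_ (norm_nonneg _)) (hS _ (hmem t ht'))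
      rw [hnorm t ht']
      nlinarith [mul_nonneg ht.1 hρ0, hden t ht']
    calc ‖w • deriv f (t * w)‖ = ρ * ‖deriv f (t * w)‖ := norm_smul _ _
      _ ≤ ρ * (S / (1 - t * ρ)) := by gcongr; exact (le_div_iff₀' (hden t ht')).mpr hle
      _ = S * (ρ / (1 - t * ρ)) := by ring
  have key := image_norm_le_of_norm_deriv_right_le_deriv_boundary'
    (fun t ht => (hF t ht).continuousAt.continuousWithinAt)
    (fun t ht => (hF t (Ico_subset_Icc_self ht)).hasDerivWithinAt) (by simp)
    (fun t ht => (hB t ht).continuousAt.continuousWithinAt)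
    (fun t ht => (hB t (Ico_subset_Icc_self ht)).hasDerivWithinAt) hbound
    (right_mem_Icc.mpr zero_le_one)
  simpa using key

theorem norm_sub_le_of_bloch {g : ℂ → E} {S : ℝ} (hg : DifferentiableOn ℂ g (ball 0 1))
    (hS : ∀ v ∈ ball (0 : ℂ) 1, (1 - ‖v‖ ^ 2) * ‖deriv g v‖ ≤ S) {z ζ : ℂ} (hz : ‖z‖ < 1)
    (hζ : ‖ζ‖ < 1) : ‖g z - g ζ‖ ≤ S * -Real.log (1 - ‖moebius ζ z‖) := by
  have hmaps : MapsTo (moebius ζ) (ball 0 1) (ball 0 1) := fun u hu => by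
    rw [mem_ball_zero_iff] at hu ⊢
    exact norm_moebius_lt_one hζ hu
  have hgm : ∀ u ∈ ball (0 : ℂ) 1, DifferentiableAt ℂ g (moebius ζ u) := fun u hu =>
    hg.differentiableAt (isOpen_ball.mem_nhds (hmaps hu))
  have hdiff : DifferentiableOn ℂ (g ∘ moebius ζ) (ball 0 1) := fun u hu =>
    ((hgm u hu).comp u (hasDerivAt_moebius (one_sub_conj_mul_ne_zero hζ
      (mem_ball_zero_iff.mp hu).le)).differentiableAt).differentiableWithinAt
  have hbound : ∀ u ∈ ball (0 : ℂ) 1, (1 - ‖u‖ ^ 2) * ‖deriv (g ∘ moebius ζ) u‖ ≤ S :=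
    fun u hu => by
      rw [one_sub_norm_sq_mul_norm_deriv_comp_moebius hζ (mem_ball_zero_iff.mp hu) (hgm u hu)]
      exact hS _ (hmaps hu)
  simpa [moebius_moebius hζ hz, moebius_zero] using
    norm_sub_apply_zero_le_of_bloch hdiff hbound (norm_moebius_lt_one hζ hz)

end

theorem neg_log_one_sub_norm_moebius_mul_rpow_le {l : ℝ} (hl0 : 0 ≤ l) (hl1 : l < 1) {z ζ : ℂ}
    (hz : ‖z‖ < 1) (hζ : ‖ζ‖ < 1) :
    -Real.log (1 - ‖moebius ζ z‖) * (1 - ‖z‖ ^ 2) ^ (1 - l) * (1 - ‖ζ‖ ^ 2) ^ (1 - l) ≤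
      2 / (1 - l) * ‖z - ζ‖ * ‖1 - conj z * ζ‖ ^ (1 - 2 * l) := by
  set ρ := ‖moebius ζ z‖
  set Q := ‖1 - conj z * ζ‖
  have hρ1 : ρ < 1 := norm_moebius_lt_one hζ hz
  have hQ : 0 < Q := norm_pos_iff.mpr (one_sub_conj_mul_ne_zero hz hζ.le)
  have hQsq : (Q ^ 2) ^ (1 - l) = Q * Q ^ (1 - 2 * l) := by
    rw [← Real.rpow_natCast, ← Real.rpow_mul hQ.le,
      show ((2 : ℕ) : ℝ) * (1 - l) = 1 + (1 - 2 * l) by push_cast; ring, Real.rpow_add hQ,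
      Real.rpow_one]
  have hweights : (1 - ‖z‖ ^ 2) ^ (1 - l) * (1 - ‖ζ‖ ^ 2) ^ (1 - l) =
      (1 - ρ ^ 2) ^ (1 - l) * (Q * Q ^ (1 - 2 * l)) := by
    rw [← Real.mul_rpow (by nlinarith [norm_nonneg z]) (by nlinarith [norm_nonneg ζ]),
      one_sub_norm_sq_mul_one_sub_norm_sq hz hζ,
      Real.mul_rpow (by nlinarith [norm_nonneg (moebius ζ z)]) (by positivity), hQsq]
  calc -Real.log (1 - ρ) * (1 - ‖z‖ ^ 2) ^ (1 - l) * (1 - ‖ζ‖ ^ 2) ^ (1 - l)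
      = -Real.log (1 - ρ) * (1 - ρ ^ 2) ^ (1 - l) * Q * Q ^ (1 - 2 * l) := by
        rw [mul_assoc, hweights]
        ring
    _ ≤ 2 / (1 - l) * ρ * Q * Q ^ (1 - 2 * l) := by
        gcongr ?_ * _ * _
        exact neg_log_one_sub_mul_one_sub_sq_rpow_le (by linarith) (by linarith) (norm_nonneg _)
          hρ1
    _ = 2 / (1 - l) * ‖z - ζ‖ * Q ^ (1 - 2 * l) := by
        rw [← norm_moebius_mul_norm_one_sub_conj_mul hz hζ]
        ring

theorem stmt2 (l : ℝ) (hl0 : 0 < l) (hl1 : l < 1) :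
    ∃ C : ℝ, ∀ g : ℂ → ℂ, MemBloch g → ∀ z ∈ ball (0 : ℂ) 1, ∀ ζ ∈ ball (0 : ℂ) 1,
      z ≠ ζ →
      ‖g z - g ζ‖ * (1 - ‖z‖ ^ 2) ^ (1 - l) * (1 - ‖ζ‖ ^ 2) ^ (1 - l) ≤
        C * blochNorm g * ‖z - ζ‖ * ‖1 - (starRingEnd ℂ) z * ζ‖ ^ (1 - 2 * l) := by
  refine ⟨2 / (1 - l), fun g hg z hz ζ hζ _ => ?_⟩
  rw [mem_ball_zero_iff] at hz hζ
  set S := sSup ((fun z => (1 - ‖z‖ ^ 2) * ‖deriv g z‖) '' ball (0 : ℂ) 1)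
  have hS : ∀ v ∈ ball (0 : ℂ) 1, (1 - ‖v‖ ^ 2) * ‖deriv g v‖ ≤ S :=
    fun v hv => le_csSup hg.2 ⟨v, hv, rfl⟩
  have hS0 : 0 ≤ S := (norm_nonneg _).trans (by simpa using hS 0 (mem_ball_self one_pos))
  have hSB : S ≤ blochNorm g := le_add_of_nonneg_left (norm_nonneg _)
  have hz2 : 0 ≤ 1 - ‖z‖ ^ 2 := by nlinarith [norm_nonneg z]
  have hζ2 : 0 ≤ 1 - ‖ζ‖ ^ 2 := by nlinarith [norm_nonneg ζ]
  have hC : 0 ≤ 2 / (1 - l) := div_nonneg zero_le_two (by linarith)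
  calc ‖g z - g ζ‖ * (1 - ‖z‖ ^ 2) ^ (1 - l) * (1 - ‖ζ‖ ^ 2) ^ (1 - l)
      ≤ S * -Real.log (1 - ‖moebius ζ z‖) * (1 - ‖z‖ ^ 2) ^ (1 - l) *
          (1 - ‖ζ‖ ^ 2) ^ (1 - l) := by
        gcongr
        exact norm_sub_le_of_bloch hg.1 hS hz hζ
    _ = S * (-Real.log (1 - ‖moebius ζ z‖) * (1 - ‖z‖ ^ 2) ^ (1 - l) *
          (1 - ‖ζ‖ ^ 2) ^ (1 - l)) := by ring
    _ ≤ S * (2 / (1 - l) * ‖z - ζ‖ * ‖1 - conj z * ζ‖ ^ (1 - 2 * l)) :=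
        mul_le_mul_of_nonneg_left (neg_log_one_sub_norm_moebius_mul_rpow_le hl0.le hl1 hz hζ) hS0
    _ = 2 / (1 - l) * S * ‖z - ζ‖ * ‖1 - conj z * ζ‖ ^ (1 - 2 * l) := by ring
    _ ≤ 2 / (1 - l) * blochNorm g * ‖z - ζ‖ * ‖1 - conj z * ζ‖ ^ (1 - 2 * l) := by gcongr
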